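/- arXiv:1007.1883 — 3 statements merged into one kernel-verified Lean document; each statement's English description precedes it below -/
import Mathlib

section
/- Let k ∈ H^1_1([0,T]) be a kernel and H ∈ C^1(ℝ). Then for any sufficiently smooth function u on (0,T) and for a.a. t ∈ (0,T): H'(u(t)) d/dt (k∗u)(t) = d/dt (k∗H(u))(t) + (−H(u(t)) + H'(u(t))u(t)) k(t) + ∫_0^t [H(u(t−s)) − H(u(t)) − H'(u(t))(u(t−s) − u(t))] (−k̇(s)) ds, where (k∗u)(t) = ∫_0^t k(t−τ)u(τ) dτ. -/
/-!
For `k` of class `C¹` on `[0, T]` we have `k (t - τ) = k 0 + ∫ σ in 0..t - τ, k' σ`, and exchanging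
the order of integration over the triangle `0 ≤ τ ≤ x ≤ t` gives
`(k ∗ g) t = ∫ x in 0..t, (k 0 * g x + (k' ∗ g) x)` for continuous `g`. Hence at every interior
point `(k ∗ g)' t = k 0 * g t + ∫ s in 0..t, k' s * g (t - s)`. Applied to `g = u` and `g = H ∘ u`,
the identity becomes linear algebra in these two integrals together with
`∫ s in 0..t, k' s = k t - k 0`. Since only values on `[0, T]` enter, `g` and `k'` are first
extended continuously to `ℝ`.
-/

open MeasureTheory intervalIntegral

/-- Convolution on the positive half-line: (k∗u)(t) = ∫_0^t k(t-τ) u(τ) dτ. -/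
noncomputable def conv (k u : ℝ → ℝ) (t : ℝ) : ℝ := ∫ τ in (0:ℝ)..t, k (t - τ) * u τ

open Set Function

theorem ContinuousOn.exists_continuous_eqOn_Icc {α β : Type*} [LinearOrder α] [TopologicalSpace α]
    [OrderTopology α] [TopologicalSpace β] {f : α → β} {a b : α} (hab : a ≤ b)
    (hf : ContinuousOn f (Icc a b)) : ∃ F : α → β, Continuous F ∧ EqOn F f (Icc a b) :=
  ⟨IccExtend hab ((Icc a b).domRestrict f),
    (continuousOn_iff_continuous_domRestrict.1 hf).Icc_extend',
    fun _ hx => IccExtend_of_mem hab _ hx⟩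

theorem integral_integral_swap_triangle {h : ℝ → ℝ → ℝ} (hh : Continuous (uncurry h)) {a b : ℝ}
    (hab : a ≤ b) :
    ∫ τ in a..b, ∫ x in τ..b, h τ x = ∫ x in a..b, ∫ τ in a..x, h τ x := by
  set μ := volume.restrict (Ioc a b)
  let f : ℝ → ℝ → ℝ := fun τ x => (Ioi τ).indicator (h τ) x
  have hf : Integrable (uncurry f) (μ.prod μ) := by
    have hfh : uncurry f = {p : ℝ × ℝ | p.1 < p.2}.indicator (uncurry h) := by
      ext ⟨τ, x⟩
      by_cases hτx : τ < x <;> simp [f, indicator, hτx]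
    rw [hfh, Measure.prod_restrict]
    refine Integrable.indicator ?_ (measurableSet_lt measurable_fst measurable_snd)
    exact (hh.continuousOn.integrableOn_compact (isCompact_Icc.prod isCompact_Icc)).mono_set
      (prod_mono Ioc_subset_Icc_self Ioc_subset_Icc_self)
  have inner_left : ∀ τ ∈ Ioc a b, ∫ x in τ..b, h τ x = ∫ x, f τ x ∂μ := fun τ hτ => by
    rw [integral_of_le hτ.2, setIntegral_indicator measurableSet_Ioi, Ioc_inter_Ioi,
      max_eq_right hτ.1.le]
  have inner_right : ∀ x ∈ Ioc a b, ∫ τ, f τ x ∂μ = ∫ τ in a..x, h τ x := fun x hx => by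
    have hfx : (fun τ => f τ x) = (Iio x).indicator (fun τ => h τ x) := by
      ext τ
      by_cases hτx : τ < x <;> simp [f, indicator, hτx]
    have hIoo : Ioc a b ∩ Iio x = Ioo a x := by
      ext τ
      simp only [mem_inter_iff, mem_Ioc, mem_Iio, mem_Ioo]
      constructor
      · rintro ⟨⟨h1, -⟩, h2⟩; exact ⟨h1, h2⟩
      · rintro ⟨h1, h2⟩; exact ⟨⟨h1, h2.le.trans hx.2⟩, h2⟩
    rw [hfx, setIntegral_indicator measurableSet_Iio, hIoo, ← integral_Ioc_eq_integral_Ioo,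
      integral_of_le hx.1.le]
  calc ∫ τ in a..b, ∫ x in τ..b, h τ x
      = ∫ τ, ∫ x, f τ x ∂μ ∂μ := by
        rw [integral_of_le hab]; exact setIntegral_congr_fun measurableSet_Ioc inner_left
    _ = ∫ x, ∫ τ, f τ x ∂μ ∂μ := integral_integral_swap hf
    _ = ∫ x in a..b, ∫ τ in a..x, h τ x := by
        rw [integral_of_le hab]; exact setIntegral_congr_fun measurableSet_Ioc inner_right

theorem conv_eq_integral_mul_sub (k u : ℝ → ℝ) (t : ℝ) :
    conv k u t = ∫ s in 0..t, k s * u (t - s) := by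
  simpa [conv] using integral_comp_sub_left (fun s => k s * u (t - s)) t (a := 0) (b := t)

theorem continuous_conv {k u : ℝ → ℝ} (hk : Continuous k) (hu : Continuous u) :
    Continuous (conv k u) :=
  continuous_parametric_intervalIntegral_of_continuous (by fun_prop) continuous_id

theorem conv_eq_of_eqOn {k u v : ℝ → ℝ} {t : ℝ} (ht : 0 ≤ t) (huv : EqOn u v (Icc 0 t)) :
    conv k u t = conv k v t :=
  integral_congr fun τ hτ => by rw [uIcc_of_le ht] at hτ; simp only [huv hτ]

theorem conv_eq_integral_of_eq_add_integral {k d g : ℝ → ℝ} {t : ℝ} (hd : Continuous d)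
    (hg : Continuous g) (hk : ∀ a ∈ Icc 0 t, k a = k 0 + ∫ σ in 0..a, d σ) (ht : 0 ≤ t) :
    conv k g t = ∫ x in 0..t, (k 0 * g x + conv d g x) := by
  have hinner : ∀ τ, ∫ x in τ..t, d (x - τ) * g τ = (∫ σ in 0..t - τ, d σ) * g τ := fun τ => by
    rw [intervalIntegral.integral_mul_const, integral_comp_sub_right d τ, sub_self]
  have hcont : Continuous fun τ => ∫ x in τ..t, d (x - τ) * g τ := by
    simp_rw [hinner]
    exact ((continuous_primitive hd.intervalIntegrable 0).comp (by fun_prop)).mul hg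
  have hkg : EqOn (fun τ => k (t - τ) * g τ) (fun τ => k 0 * g τ + ∫ x in τ..t, d (x - τ) * g τ)
      (uIcc 0 t) := fun τ hτ => by
    rw [uIcc_of_le ht] at hτ
    simp only [hinner, hk _ ⟨sub_nonneg.2 hτ.2, by linarith [hτ.1]⟩]
    ring
  have hg0 : IntervalIntegrable (fun x => k 0 * g x) volume 0 t :=
    (continuous_const.mul hg).intervalIntegrable _ _
  calc conv k g t
      = ∫ τ in 0..t, (k 0 * g τ + ∫ x in τ..t, d (x - τ) * g τ) := integral_congr hkg
    _ = (∫ τ in 0..t, k 0 * g τ) + ∫ τ in 0..t, ∫ x in τ..t, d (x - τ) * g τ :=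
        integral_add hg0 (hcont.intervalIntegrable _ _)
    _ = (∫ x in 0..t, k 0 * g x) + ∫ x in 0..t, conv d g x := by
        rw [integral_integral_swap_triangle (h := fun τ x => d (x - τ) * g τ) (by fun_prop) ht]
        rfl
    _ = ∫ x in 0..t, (k 0 * g x + conv d g x) :=
        (integral_add hg0 ((continuous_conv hd hg).intervalIntegrable _ _)).symm

theorem hasDerivAt_conv_of_eq_add_integral {k d g : ℝ → ℝ} {T t : ℝ} (hd : Continuous d)
    (hg : Continuous g) (hk : ∀ a ∈ Icc 0 T, k a = k 0 + ∫ σ in 0..a, d σ)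
    (ht : t ∈ Ioo 0 T) : HasDerivAt (conv k g) (k 0 * g t + conv d g t) t := by
  have hcont : Continuous fun x => k 0 * g x + conv d g x :=
    (continuous_const.mul hg).add (continuous_conv hd hg)
  have hprim : conv k g =ᶠ[nhds t] fun t' => ∫ x in 0..t', (k 0 * g x + conv d g x) := by
    filter_upwards [Icc_mem_nhds ht.1 ht.2] with t' ht'
    exact conv_eq_integral_of_eq_add_integral hd hg
      (fun a ha => hk a ⟨ha.1, ha.2.trans ht'.2⟩) ht'.1
  exact (integral_hasDerivAt_right (hcont.intervalIntegrable _ _)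
    (hcont.stronglyMeasurableAtFilter _ _) hcont.continuousAt).congr_of_eventuallyEq hprim

theorem hasDerivAt_conv {k g : ℝ → ℝ} {T t : ℝ} (hk : ContDiffOn ℝ 1 k (Icc 0 T))
    (hg : ContinuousOn g (Icc 0 T)) (ht : t ∈ Ioo 0 T) :
    HasDerivAt (conv k g) (k 0 * g t + ∫ s in 0..t, deriv k s * g (t - s)) t := by
  have hT : 0 < T := ht.1.trans ht.2
  obtain ⟨G, hGc, hG⟩ := hg.exists_continuous_eqOn_Icc hT.le
  obtain ⟨D, hDc, hD⟩ :=
    (hk.continuousOn_derivWithin (uniqueDiffOn_Icc hT) le_rfl).exists_continuous_eqOn_Icc hT.le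
  have hD' : ∀ x ∈ Ioo 0 T, HasDerivAt k (D x) x := fun x hx => by
    rw [hD (Ioo_subset_Icc_self hx)]
    exact (hk.differentiableOn one_ne_zero x (Ioo_subset_Icc_self hx)).hasDerivWithinAt.hasDerivAt
      (Icc_mem_nhds hx.1 hx.2)
  have hFTC : ∀ a ∈ Icc 0 T, k a = k 0 + ∫ σ in 0..a, D σ := fun a ha => by
    rw [integral_eq_sub_of_hasDerivAt_of_le ha.1 (hk.continuousOn.mono (Icc_subset_Icc_right ha.2))
      (fun x hx => hD' x ⟨hx.1, hx.2.trans_le ha.2⟩) (hDc.intervalIntegrable _ _)]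
    ring
  have hconv : conv k g =ᶠ[nhds t] conv k G := by
    filter_upwards [Icc_mem_nhds ht.1 ht.2] with t' ht'
    exact conv_eq_of_eqOn ht'.1 (hG.symm.mono (Icc_subset_Icc_right ht'.2))
  have hval : k 0 * G t + conv D G t = k 0 * g t + ∫ s in 0..t, deriv k s * g (t - s) := by
    rw [hG ⟨ht.1.le, ht.2.le⟩, conv_eq_integral_mul_sub]
    congr 1
    refine integral_congr_ae (.of_forall fun s hs => ?_)
    rw [uIoc_of_le ht.1.le] at hs
    rw [(hD' s ⟨hs.1, hs.2.trans_lt ht.2⟩).deriv, hG ⟨by linarith [hs.2], by linarith [hs.1, ht.2]⟩]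
  exact ((hasDerivAt_conv_of_eq_add_integral hDc hGc hFTC ht).congr_of_eventuallyEq
    hconv).congr_deriv hval

theorem ContinuousOn.comp_const_sub_Icc {g : ℝ → ℝ} {T t : ℝ} (hg : ContinuousOn g (Icc 0 T))
    (htT : t ≤ T) : ContinuousOn (fun s => g (t - s)) (Icc 0 t) :=
  hg.comp (continuousOn_const.sub continuousOn_id) fun s hs =>
    ⟨by linarith [hs.2], by linarith [hs.1]⟩

theorem stmt_3_general (T : ℝ) (k u H : ℝ → ℝ)
    (hk : ContDiffOn ℝ 1 k (Set.Icc 0 T))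
    (hH : ContDiff ℝ 1 H)
    (hu : ContDiffOn ℝ 1 u (Set.Icc 0 T)) :
    ∀ᵐ t ∂(volume.restrict (Set.Ioo 0 T)),
      deriv H (u t) * deriv (conv k u) t
        = deriv (conv k (fun τ => H (u τ))) t
          + (-(H (u t)) + deriv H (u t) * u t) * k t
          + ∫ s in (0:ℝ)..t,
              (H (u (t - s)) - H (u t) - deriv H (u t) * (u (t - s) - u t))
                * (-(deriv k s)) := by
  rw [ae_restrict_iff' measurableSet_Ioo]
  refine .of_forall fun t ht => ?_
  have hHu : ContinuousOn (fun τ => H (u τ)) (Icc 0 T) :=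
    hH.continuous.comp_continuousOn hu.continuousOn
  have hkt : AbsolutelyContinuousOnInterval k 0 t :=
    (hk.mono (by rw [uIcc_of_le ht.1.le]; exact Icc_subset_Icc_right ht.2.le)
      ).absolutelyContinuousOnInterval
  have hk' := hkt.intervalIntegrable_deriv
  have hk'u := hk'.mul_continuousOn
    (uIcc_of_le ht.1.le ▸ hu.continuousOn.comp_const_sub_Icc ht.2.le)
  have hk'Hu := hk'.mul_continuousOn (uIcc_of_le ht.1.le ▸ hHu.comp_const_sub_Icc ht.2.le)
  set v := deriv H (u t)
  have hbracket : ∫ s in 0..t, (H (u (t - s)) - H (u t) - v * (u (t - s) - u t)) * -deriv k s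
      = v * (∫ s in 0..t, deriv k s * u (t - s)) - (∫ s in 0..t, deriv k s * H (u (t - s)))
        + (H (u t) - v * u t) * (k t - k 0) := by
    rw [← hkt.integral_deriv_eq_sub, ← intervalIntegral.integral_const_mul,
      ← intervalIntegral.integral_const_mul,
      ← intervalIntegral.integral_sub (hk'u.const_mul v) hk'Hu,
      ← intervalIntegral.integral_add ((hk'u.const_mul v).sub hk'Hu) (hk'.const_mul _)]
    exact integral_congr fun s _ => by ring
  rw [(hasDerivAt_conv hk hu.continuousOn ht).deriv, (hasDerivAt_conv hk hHu ht).deriv, hbracket]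
  ring

theorem stmt_3 (T : ℝ) (hT : 0 < T) (k u H : ℝ → ℝ)
    (hk : ContDiffOn ℝ 1 k (Set.Icc 0 T))
    (hH : ContDiff ℝ 1 H)
    (hu : ContDiffOn ℝ 1 u (Set.Icc 0 T)) :
    ∀ᵐ t ∂(volume.restrict (Set.Ioo 0 T)),
      deriv H (u t) * deriv (conv k u) t
        = deriv (conv k (fun τ => H (u τ))) t
          + (-(H (u t)) + deriv H (u t) * u t) * k t
          + ∫ s in (0:ℝ)..t,
              (H (u (t - s)) - H (u t) - deriv H (u t) * (u (t - s) - u t))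
                * (-(deriv k s)) :=
  stmt_3_general T k u H hk hH hu
end

section
/- Let k ∈ H^1_1([0,T]) be nonnegative and nonincreasing, and let u ∈ L_2([0,T]) be such that k∗u is differentiable a.e. Then for a.a. t ∈ (0,T): u(t)_+ · d/dt(k∗u)(t) ≥ (1/2) d/dt (k ∗ (u_+)²)(t), where y_+ = max{y,0}. The analogous inequality holds with u_− = min{u,0} in place of u_+. -/
open MeasureTheory

/-!
Both inequalities are instances of `φ(u t) (k∗u)'(t) ≥ (k∗H(u))'(t)` for a function `H` with
`H 0 ≤ 0` and supporting lines `H x + φ x (y - x) ≤ H y`: take `H = (y₊)², φ = 2y₊`,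
resp. `H = (y₋)², φ = 2y₋`.

Fix `t`, put `a = φ(u t)`, `w = a u - H(u)` and `c = a u(t) - H(u t)`. The supporting line at
`u t` gives `w ≤ c`, with equality at `t`, and `c ≥ 0` because `H 0 ≤ 0`. Since `k` is
nonnegative and nonincreasing, passing from `x` to `y ≥ x` lowers `k∗w` by at most
`k(0) ∫ₓʸ (c - w)`, so `Ψ x = (k∗w)(x) + k(0) ∫₀ˣ (c - w)` is nondecreasing. At a Lebesgue point
`t` of `u` and `H(u)` the second summand has derivative `k(0) (c - w(t)) = 0`, so
`0 ≤ Ψ'(t) = a (k∗u)'(t) - (k∗H(u))'(t)`.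
-/

open Set Filter Topology

lemma MeasureTheory.IntegrableOn.intervalIntegrable_of_Ioc {f : ℝ → ℝ} {a b x y : ℝ}
    (hf : IntegrableOn f (Ioc a b)) (hax : a ≤ x) (hxy : x ≤ y) (hyb : y ≤ b) :
    IntervalIntegrable f volume x y :=
  (intervalIntegrable_iff_integrableOn_Ioc_of_le hxy).2 (hf.mono_set (Ioc_subset_Ioc hax hyb))

lemma ae_hasDerivAt_integral_of_integrableOn_Ioc {f : ℝ → ℝ} {a b : ℝ}
    (hf : IntegrableOn f (Ioc a b)) :
    ∀ᵐ t ∂volume.restrict (Ioo a b), HasDerivAt (fun x => ∫ τ in a..x, f τ) (f t) t := by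
  rcases le_or_gt b a with hba | hab
  · simp [Ioo_eq_empty hba.not_gt]
  have hderiv := (hf.intervalIntegrable_of_Ioc le_rfl hab.le le_rfl).ae_hasDerivAt_integral
  filter_upwards [ae_restrict_of_ae hderiv, ae_restrict_mem measurableSet_Ioo] with t ht htab
  exact ht (Icc_subset_uIcc (Ioo_subset_Icc_self htab)) a left_mem_uIcc

lemma max_zero_sq_add_two_mul_sub_le (x y : ℝ) :
    max x 0 ^ 2 + 2 * max x 0 * (y - x) ≤ max y 0 ^ 2 := by
  rcases le_total x 0 with hx | hx <;> rcases le_total y 0 with hy | hy <;>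
    simp only [max_eq_left, max_eq_right, hx, hy] <;> nlinarith [sq_nonneg (y - x)]

lemma min_zero_sq_add_two_mul_sub_le (x y : ℝ) :
    min x 0 ^ 2 + 2 * min x 0 * (y - x) ≤ min y 0 ^ 2 := by
  rcases le_total x 0 with hx | hx <;> rcases le_total y 0 with hy | hy <;>
    simp only [min_eq_left, min_eq_right, hx, hy] <;> nlinarith [sq_nonneg (y - x)]

section KernelEstimates

variable {T : ℝ} {k : ℝ → ℝ}

lemma intervalIntegrable_kernel_mul (hk0 : ∀ s ∈ Icc 0 T, 0 ≤ k s)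
    (hk : AntitoneOn k (Icc 0 T)) {f : ℝ → ℝ} (hf : IntegrableOn f (Ioc 0 T)) {x a b : ℝ}
    (ha : 0 ≤ a) (hab : a ≤ b) (hbx : b ≤ x) (hxT : x ≤ T) :
    IntervalIntegrable (fun τ => k (x - τ) * f τ) volume a b := by
  have hmaps : MapsTo (fun τ => x - τ) (Ioc a b) (Icc 0 T) :=
    fun τ hτ => ⟨by linarith [hτ.2], by linarith [hτ.1]⟩
  rw [intervalIntegrable_iff_integrableOn_Ioc_of_le hab]
  refine Integrable.bdd_mul (c := k 0) (hf.mono_set (Ioc_subset_Ioc ha (hbx.trans hxT))) ?_ ?_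
  · exact (aemeasurable_restrict_of_monotoneOn measurableSet_Ioc
      fun τ₁ h₁ τ₂ h₂ h => hk (hmaps h₂) (hmaps h₁) (by linarith)).aestronglyMeasurable
  · refine (ae_restrict_iff' measurableSet_Ioc).2 (Eventually.of_forall fun τ hτ => ?_)
    rw [Real.norm_eq_abs, abs_of_nonneg (hk0 _ (hmaps hτ))]
    exact hk ⟨le_rfl, by linarith⟩ (hmaps hτ) (hmaps hτ).1

lemma conv_sub (hk0 : ∀ s ∈ Icc 0 T, 0 ≤ k s) (hk : AntitoneOn k (Icc 0 T)) {f g : ℝ → ℝ}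
    (hf : IntegrableOn f (Ioc 0 T)) (hg : IntegrableOn g (Ioc 0 T)) {x : ℝ} (hx : 0 ≤ x)
    (hxT : x ≤ T) : conv k (fun τ => f τ - g τ) x = conv k f x - conv k g x := by
  simp only [conv, mul_sub]
  exact intervalIntegral.integral_sub
    (intervalIntegrable_kernel_mul hk0 hk hf le_rfl hx le_rfl hxT)
    (intervalIntegrable_kernel_mul hk0 hk hg le_rfl hx le_rfl hxT)

lemma conv_const_mul (c : ℝ) (f : ℝ → ℝ) :
    conv k (fun τ => c * f τ) = fun x => c * conv k f x := by
  funext x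
  simp only [conv, mul_left_comm _ c]
  exact intervalIntegral.integral_const_mul c _

lemma conv_const_monotoneOn (hk0 : ∀ s ∈ Icc 0 T, 0 ≤ k s) (hk : AntitoneOn k (Icc 0 T))
    {c : ℝ} (hc : 0 ≤ c) : MonotoneOn (conv k fun _ => c) (Icc 0 T) := by
  have hconv : ∀ x, conv k (fun _ => c) x = (∫ s in 0..x, k s) * c := fun x => by
    simp [conv, intervalIntegral.integral_mul_const, intervalIntegral.integral_comp_sub_left]
  intro x hx y hy hxy
  simp only [hconv]
  refine mul_le_mul_of_nonneg_right
    (intervalIntegral.integral_mono_interval le_rfl hx.1 hxy ?_ ?_) hc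
  · refine (ae_restrict_iff' measurableSet_Ioc).2 (Eventually.of_forall fun s hs => ?_)
    exact hk0 s ⟨hs.1.le, hs.2.trans hy.2⟩
  · exact (hk.mono (uIcc_of_le hy.1 ▸ Icc_subset_Icc_right hy.2)).intervalIntegrable

lemma conv_sub_conv_le_of_nonneg (hk0 : ∀ s ∈ Icc 0 T, 0 ≤ k s) (hk : AntitoneOn k (Icc 0 T))
    {g : ℝ → ℝ} (hg : IntegrableOn g (Ioc 0 T)) (hg0 : ∀ τ ∈ Ioc 0 T, 0 ≤ g τ) {x y : ℝ}
    (hx : 0 ≤ x) (hxy : x ≤ y) (hyT : y ≤ T) :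
    conv k g y - conv k g x ≤ k 0 * ∫ τ in x..y, g τ := by
  have hsplit : conv k g y = (∫ τ in 0..x, k (y - τ) * g τ) + ∫ τ in x..y, k (y - τ) * g τ :=
    (intervalIntegral.integral_add_adjacent_intervals
      (intervalIntegrable_kernel_mul hk0 hk hg le_rfl hx hxy hyT)
      (intervalIntegrable_kernel_mul hk0 hk hg hx hxy le_rfl hyT)).symm
  have hpast : ∫ τ in 0..x, k (y - τ) * g τ ≤ conv k g x := by
    refine intervalIntegral.integral_mono_on_of_le_Ioo hx
      (intervalIntegrable_kernel_mul hk0 hk hg le_rfl hx hxy hyT)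
      (intervalIntegrable_kernel_mul hk0 hk hg le_rfl hx le_rfl (hxy.trans hyT))
      fun τ hτ => ?_
    exact mul_le_mul_of_nonneg_right (hk ⟨by linarith [hτ.2], by linarith [hτ.1]⟩
      ⟨by linarith [hτ.2], by linarith [hτ.1]⟩ (by linarith))
      (hg0 τ ⟨hτ.1, by linarith [hτ.2]⟩)
  have hrecent : ∫ τ in x..y, k (y - τ) * g τ ≤ k 0 * ∫ τ in x..y, g τ := by
    rw [← intervalIntegral.integral_const_mul]
    refine intervalIntegral.integral_mono_on_of_le_Ioo hxy
      (intervalIntegrable_kernel_mul hk0 hk hg hx hxy le_rfl hyT)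
      ((hg.intervalIntegrable_of_Ioc hx hxy hyT).const_mul _) fun τ hτ => ?_
    exact mul_le_mul_of_nonneg_right (hk ⟨le_rfl, by linarith [hτ.1]⟩
      ⟨by linarith [hτ.2], by linarith [hτ.1]⟩ (by linarith [hτ.2]))
      (hg0 τ ⟨by linarith [hτ.1], by linarith [hτ.2]⟩)
  linarith

lemma monotoneOn_conv_add_integral (hk0 : ∀ s ∈ Icc 0 T, 0 ≤ k s)
    (hk : AntitoneOn k (Icc 0 T)) {w : ℝ → ℝ} {c : ℝ} (hw : IntegrableOn w (Ioc 0 T))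
    (hwc : ∀ τ ∈ Ioc 0 T, w τ ≤ c) (hc : 0 ≤ c) :
    MonotoneOn (fun x => conv k w x + k 0 * ∫ τ in 0..x, (c - w τ)) (Icc 0 T) := by
  have hconst : IntegrableOn (fun _ => c) (Ioc 0 T) := integrableOn_const measure_Ioc_lt_top.ne
  have hg : IntegrableOn (fun τ => c - w τ) (Ioc 0 T) := hconst.sub hw
  have hconv : ∀ z ∈ Icc 0 T,
      conv k w z = conv k (fun _ => c) z - conv k (fun τ => c - w τ) z := fun z hz => by
    rw [← conv_sub hk0 hk hconst hg hz.1 hz.2]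
    simp only [sub_sub_cancel]
  intro x hx y hy hxy
  have hint : ∫ τ in 0..y, (c - w τ) = (∫ τ in 0..x, (c - w τ)) + ∫ τ in x..y, (c - w τ) :=
    (intervalIntegral.integral_add_adjacent_intervals
      (hg.intervalIntegrable_of_Ioc le_rfl hx.1 hx.2)
      (hg.intervalIntegrable_of_Ioc hx.1 hxy hy.2)).symm
  have hmono := conv_const_monotoneOn hk0 hk hc hx hy hxy
  have hbound := conv_sub_conv_le_of_nonneg hk0 hk hg
    (fun τ hτ => sub_nonneg.2 (hwc τ hτ)) hx.1 hxy hy.2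
  simp only [hconv x hx, hconv y hy, hint, mul_add]
  linarith

theorem ae_deriv_conv_comp_le_mul_deriv_conv (hk0 : ∀ s ∈ Icc 0 T, 0 ≤ k s)
    (hk : AntitoneOn k (Icc 0 T)) {u H φ : ℝ → ℝ} (hH : ∀ x y, H x + φ x * (y - x) ≤ H y)
    (hH0 : H 0 ≤ 0) (hu : IntegrableOn u (Ioc 0 T))
    (hHu : IntegrableOn (fun τ => H (u τ)) (Ioc 0 T))
    (hd : ∀ᵐ t ∂volume.restrict (Ioo 0 T), DifferentiableAt ℝ (conv k u) t)
    (hdH : ∀ᵐ t ∂volume.restrict (Ioo 0 T), DifferentiableAt ℝ (conv k fun τ => H (u τ)) t) :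
    ∀ᵐ t ∂volume.restrict (Ioo 0 T),
      deriv (conv k fun τ => H (u τ)) t ≤ φ (u t) * deriv (conv k u) t := by
  filter_upwards [hd, hdH, ae_hasDerivAt_integral_of_integrableOn_Ioc hu,
    ae_hasDerivAt_integral_of_integrableOn_Ioc hHu, ae_restrict_mem measurableSet_Ioo]
    with t hdt hdHt hUt hHUt ht
  set a := φ (u t)
  set c := a * u t - H (u t)
  have hwc : ∀ τ, a * u τ - H (u τ) ≤ c := fun τ => by linarith [hH (u t) (u τ)]
  have hc : 0 ≤ c := by linarith [hH (u t) 0]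
  have hmono := monotoneOn_conv_add_integral (w := fun τ => a * u τ - H (u τ)) hk0 hk
    ((hu.const_mul a).sub hHu) (fun τ _ => hwc τ) hc
  have hΨ : EqOn (fun x => conv k (fun τ => a * u τ - H (u τ)) x
        + k 0 * ∫ τ in 0..x, (c - (a * u τ - H (u τ))))
      (fun x => a * conv k u x - conv k (fun τ => H (u τ)) x
        + k 0 * (c * x - (a * (∫ τ in 0..x, u τ) - ∫ τ in 0..x, H (u τ)))) (Icc 0 T) := by
    intro x hx
    have hux := hu.intervalIntegrable_of_Ioc le_rfl hx.1 hx.2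
    have hHux := hHu.intervalIntegrable_of_Ioc le_rfl hx.1 hx.2
    simp only
    rw [conv_sub hk0 hk (hu.const_mul a) hHu hx.1 hx.2, conv_const_mul,
      intervalIntegral.integral_sub intervalIntegrable_const ((hux.const_mul a).sub hHux),
      intervalIntegral.integral_sub (hux.const_mul a) hHux, intervalIntegral.integral_const_mul,
      intervalIntegral.integral_const]
    simp [mul_comm]
  have hderiv : HasDerivAt (fun x => a * conv k u x - conv k (fun τ => H (u τ)) x
        + k 0 * (c * x - (a * (∫ τ in 0..x, u τ) - ∫ τ in 0..x, H (u τ))))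
      (a * deriv (conv k u) t - deriv (conv k fun τ => H (u τ)) t) t :=
    (((hdt.hasDerivAt.const_mul a).sub hdHt.hasDerivAt).add
      ((((hasDerivAt_id t).const_mul c).sub ((hUt.const_mul a).sub hHUt)).const_mul
        (k 0))).congr_deriv (by simp [c])
  have hacc : AccPt t (𝓟 (Icc 0 T)) := accPt_iff_frequently_nhdsNE.2
    (eventually_nhdsWithin_of_eventually_nhds (Icc_mem_nhds ht.1 ht.2)).frequently
  have := hderiv.hasDerivWithinAt.nonneg_of_monotoneOn hacc
    fun x hx y hy hxy => (hΨ hx).symm.le.trans ((hmono hx hy hxy).trans (hΨ hy).le)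
  linarith

end KernelEstimates

theorem stmt_4_general (T : ℝ) (k u : ℝ → ℝ)
    -- k nonnegative and nonincreasing
    (hknn : ∀ t ∈ Set.Icc (0:ℝ) T, 0 ≤ k t)
    (hkmono : AntitoneOn k (Set.Icc 0 T))
    -- u ∈ L_2([0,T])
    (hu : MemLp u 2 (volume.restrict (Set.Ioc 0 T)))
    -- the convolutions are differentiable a.e.
    (hd1 : ∀ᵐ t ∂(volume.restrict (Set.Ioo 0 T)), DifferentiableAt ℝ (conv k u) t)
    (hd2 : ∀ᵐ t ∂(volume.restrict (Set.Ioo 0 T)),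
      DifferentiableAt ℝ (conv k (fun τ => (max (u τ) 0) ^ 2)) t)
    (hd3 : ∀ᵐ t ∂(volume.restrict (Set.Ioo 0 T)),
      DifferentiableAt ℝ (conv k (fun τ => (min (u τ) 0) ^ 2)) t) :
    (∀ᵐ t ∂(volume.restrict (Set.Ioo 0 T)),
        max (u t) 0 * deriv (conv k u) t
          ≥ (1 / 2) * deriv (conv k (fun τ => (max (u τ) 0) ^ 2)) t) ∧
      (∀ᵐ t ∂(volume.restrict (Set.Ioo 0 T)),
        min (u t) 0 * deriv (conv k u) t
          ≥ (1 / 2) * deriv (conv k (fun τ => (min (u τ) 0) ^ 2)) t) := by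
  have hu₁ : IntegrableOn u (Ioc 0 T) := hu.integrable one_le_two
  have hpos : IntegrableOn (fun τ => max (u τ) 0 ^ 2) (Ioc 0 T) := hu.pos_part.integrable_sq
  have hneg : IntegrableOn (fun τ => min (u τ) 0 ^ 2) (Ioc 0 T) := by
    refine hu.neg_part.integrable_sq.congr (Eventually.of_forall fun τ => ?_)
    rcases le_total (u τ) 0 with h | h <;> simp [h]
  constructor
  · filter_upwards [ae_deriv_conv_comp_le_mul_deriv_conv hknn hkmono
      max_zero_sq_add_two_mul_sub_le (by norm_num) hu₁ hpos hd1 hd2] with t ht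
    linarith
  · filter_upwards [ae_deriv_conv_comp_le_mul_deriv_conv hknn hkmono
      min_zero_sq_add_two_mul_sub_le (by norm_num) hu₁ hneg hd1 hd3] with t ht
    linarith

theorem stmt_4 (T : ℝ) (hT : 0 < T) (k u : ℝ → ℝ)
    -- k ∈ H^1_1([0,T]): absolutely continuous with integrable derivative
    (hkd : DifferentiableOn ℝ k (Set.Ioo 0 T))
    (hkint : IntegrableOn (deriv k) (Set.Ioo 0 T))
    -- k nonnegative and nonincreasing
    (hknn : ∀ t ∈ Set.Icc (0:ℝ) T, 0 ≤ k t)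
    (hkmono : AntitoneOn k (Set.Icc 0 T))
    -- u ∈ L_2([0,T])
    (hu : MemLp u 2 (volume.restrict (Set.Ioc 0 T)))
    -- the convolutions are differentiable a.e.
    (hd1 : ∀ᵐ t ∂(volume.restrict (Set.Ioo 0 T)), DifferentiableAt ℝ (conv k u) t)
    (hd2 : ∀ᵐ t ∂(volume.restrict (Set.Ioo 0 T)),
      DifferentiableAt ℝ (conv k (fun τ => (max (u τ) 0) ^ 2)) t)
    (hd3 : ∀ᵐ t ∂(volume.restrict (Set.Ioo 0 T)),
      DifferentiableAt ℝ (conv k (fun τ => (min (u τ) 0) ^ 2)) t) :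
    (∀ᵐ t ∂(volume.restrict (Set.Ioo 0 T)),
        max (u t) 0 * deriv (conv k u) t
          ≥ (1 / 2) * deriv (conv k (fun τ => (max (u τ) 0) ^ 2)) t) ∧
      (∀ᵐ t ∂(volume.restrict (Set.Ioo 0 T)),
        min (u t) 0 * deriv (conv k u) t
          ≥ (1 / 2) * deriv (conv k (fun τ => (min (u τ) 0) ^ 2)) t) :=
  stmt_4_general T k u hknn hkmono hu hd1 hd2 hd3
end

section
/- Let α ∈ (0,1) and μ ≥ 0, and define k(t) = g_{1−α}(t) e^{−μt} and l(t) = g_α(t) e^{−μt} + μ ∫_0^t g_α(τ) e^{−μτ} dτ for t > 0, where g_β(t) = t^{β−1}/Γ(β). Then (k ∗ l)(t) = 1 for all t > 0, where ∗ is convolution on the half-line. -/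
/-!
Write `n = g_α e^{-μ·}` and `m = g_{1-α} e^{-μ·}`, so that `k = m` and `l = n + μ (1 ∗ n)`.
The exponential weight factors out of a convolution, so the Beta integral gives
`m ∗ n = g_1 e^{-μ·} = e^{-μ·}`. By Fubini on the triangle `0 < s < τ < t`, convolution with `m`
commutes with integration, `m ∗ (1 ∗ n) = 1 ∗ (m ∗ n)`,
hence `k ∗ l = e^{-μt} + μ ∫_0^t e^{-μw} dw = 1`.
-/

open MeasureTheory Real

noncomputable def rlKernel (β t : ℝ) : ℝ := t ^ (β - 1) / Real.Gamma β

open Set Function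

theorem MeasureTheory.IntegrableOn.mul_prod {α β L : Type*} [MeasurableSpace α]
    [MeasurableSpace β] [NormedRing L] {μ : Measure α} {ν : Measure β} [SFinite μ] [SFinite ν]
    {f : α → L} {g : β → L} {s : Set α} {t : Set β}
    (hf : IntegrableOn f s μ) (hg : IntegrableOn g t ν) :
    IntegrableOn (fun z : α × β => f z.1 * g z.2) (s ×ˢ t) (μ.prod ν) := by
  rw [IntegrableOn, ← Measure.prod_restrict]
  exact Integrable.mul_prod hf hg

theorem integral_integral_swap_triangle_s14 {t : ℝ} (ht : 0 ≤ t) {F : ℝ → ℝ → ℝ}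
    (hF : IntegrableOn (uncurry F) {z : ℝ × ℝ | 0 < z.1 ∧ z.1 < z.2 ∧ z.2 < t}) :
    ∫ τ in (0:ℝ)..t, ∫ s in (0:ℝ)..τ, F s τ = ∫ s in (0:ℝ)..t, ∫ τ in s..t, F s τ := by
  set T := {z : ℝ × ℝ | 0 < z.1 ∧ z.1 < z.2 ∧ z.2 < t}
  have hT : MeasurableSet T :=
    (measurableSet_lt measurable_const measurable_fst).inter
      ((measurableSet_lt measurable_fst measurable_snd).inter
        (measurableSet_lt measurable_snd measurable_const))
  have hG : Integrable (uncurry fun s τ => T.indicator (uncurry F) (s, τ))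
      (volume.prod volume) := (integrable_indicator_iff hT).2 hF
  have section_fst : ∀ τ, ∫ s, T.indicator (uncurry F) (s, τ)
      = (Ioo 0 t).indicator (fun τ => ∫ s in (0:ℝ)..τ, F s τ) τ := by
    intro τ
    by_cases hτ : τ ∈ Ioo 0 t
    · rw [indicator_of_mem hτ, intervalIntegral.integral_of_le hτ.1.le,
        integral_Ioc_eq_integral_Ioo, ← integral_indicator measurableSet_Ioo]
      congr 1 with s
      simp only [indicator_apply, T, mem_ofPred_eq, mem_Ioo, uncurry_apply_pair, hτ.2, and_true]
    · rw [indicator_of_notMem hτ]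
      refine integral_eq_zero_of_ae (.of_forall fun s => indicator_of_notMem ?_ _)
      exact fun h => hτ ⟨h.1.trans h.2.1, h.2.2⟩
  have section_snd : ∀ s, ∫ τ, T.indicator (uncurry F) (s, τ)
      = (Ioo 0 t).indicator (fun s => ∫ τ in s..t, F s τ) s := by
    intro s
    by_cases hs : s ∈ Ioo 0 t
    · rw [indicator_of_mem hs, intervalIntegral.integral_of_le hs.2.le,
        integral_Ioc_eq_integral_Ioo, ← integral_indicator measurableSet_Ioo]
      congr 1 with τ
      simp only [indicator_apply, T, mem_ofPred_eq, mem_Ioo, uncurry_apply_pair, hs.1, true_and]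
    · rw [indicator_of_notMem hs]
      refine integral_eq_zero_of_ae (.of_forall fun τ => indicator_of_notMem ?_ _)
      exact fun h => hs ⟨h.1, h.2.1.trans h.2.2⟩
  rw [intervalIntegral.integral_of_le ht, intervalIntegral.integral_of_le ht,
    integral_Ioc_eq_integral_Ioo, integral_Ioc_eq_integral_Ioo,
    ← integral_indicator measurableSet_Ioo, ← integral_indicator measurableSet_Ioo]
  simp_rw [← section_fst, ← section_snd]
  exact (integral_integral_swap hG).symm

theorem integral_sub_mul_primitive_eq_integral_conv {f g : ℝ → ℝ} {t : ℝ} (ht : 0 ≤ t)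
    (hf : IntervalIntegrable f volume 0 t) (hg : IntervalIntegrable g volume 0 t) :
    ∫ τ in (0:ℝ)..t, f (t - τ) * ∫ s in (0:ℝ)..τ, g s
      = ∫ w in (0:ℝ)..t, ∫ s in (0:ℝ)..w, f (w - s) * g s := by
  have hT : {z : ℝ × ℝ | 0 < z.1 ∧ z.1 < z.2 ∧ z.2 < t} ⊆ Ioo 0 t ×ˢ Ioo 0 t :=
    fun z hz => ⟨⟨hz.1, hz.2.1.trans hz.2.2⟩, ⟨hz.1.trans hz.2.1, hz.2.2⟩⟩
  have hfI : IntegrableOn f (Ioo 0 t) := (hf.1).mono_set Ioo_subset_Ioc_self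
  have hgI : IntegrableOn g (Ioo 0 t) := (hg.1).mono_set Ioo_subset_Ioc_self
  have hfI' : IntegrableOn (fun τ => f (t - τ)) (Ioo 0 t) := by
    have := (hf.comp_sub_left t).symm
    simp only [sub_self, sub_zero] at this
    exact this.1.mono_set Ioo_subset_Ioc_self
  -- both sides equal `∫ s in 0..t, g s * ∫ u in 0..(t - s), f u`
  have hleft : ∫ τ in (0:ℝ)..t, f (t - τ) * ∫ s in (0:ℝ)..τ, g s
      = ∫ s in (0:ℝ)..t, ∫ τ in s..t, g s * f (t - τ) := by
    simp_rw [← intervalIntegral.integral_const_mul, mul_comm (f _)]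
    exact integral_integral_swap_triangle_s14 ht ((hgI.mul_prod hfI').mono_set hT)
  have hright : ∫ w in (0:ℝ)..t, ∫ s in (0:ℝ)..w, f (w - s) * g s
      = ∫ s in (0:ℝ)..t, ∫ w in s..t, g s * f (w - s) := by
    simp_rw [mul_comm (f _)]
    refine integral_integral_swap_triangle_s14 ht (F := fun s w => g s * f (w - s)) ?_
    have hshear := (measurePreserving_prod_sub volume volume).integrableOn_comp_preimage
      (MeasurableEquiv.shearSubRight ℝ).measurableEmbedding
      (f := fun z : ℝ × ℝ => g z.1 * f z.2) (s := Ioo 0 t ×ˢ Ioo 0 t)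
    refine (hshear.2 (hgI.mul_prod hfI)).mono_set fun z hz => ?_
    exact ⟨⟨hz.1, hz.2.1.trans hz.2.2⟩, ⟨sub_pos.2 hz.2.1, by linarith [hz.1, hz.2.2]⟩⟩
  rw [hleft, hright]
  refine intervalIntegral.integral_congr fun s _ => ?_
  simp only [intervalIntegral.integral_const_mul, intervalIntegral.integral_comp_sub_left f t,
    intervalIntegral.integral_comp_sub_right f s, sub_self]

theorem mul_integral_exp_neg_mul (μ t : ℝ) :
    μ * ∫ w in (0:ℝ)..t, exp (-μ * w) = 1 - exp (-μ * t) := by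
  have hderiv : ∀ w, HasDerivAt (fun w => -exp (-μ * w)) (μ * exp (-μ * w)) w := fun w =>
    (((hasDerivAt_id' w).const_mul (-μ)).exp).neg.congr_deriv (by ring)
  rw [← intervalIntegral.integral_const_mul,
    intervalIntegral.integral_eq_sub_of_hasDerivAt (fun w _ => hderiv w)
      (Continuous.intervalIntegrable (by fun_prop) _ _)]
  simp only [mul_zero, exp_zero]
  ring

theorem integral_sub_rpow_mul_rpow {a b x : ℝ} (ha : 0 < a) (hb : 0 < b) (hx : 0 < x) :
    ∫ τ in (0:ℝ)..x, (x - τ) ^ (a - 1) * τ ^ (b - 1)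
      = x ^ (a + b - 1) * (Gamma a * Gamma b / Gamma (a + b)) := by
  have key := Complex.betaIntegral_scaled b a hx
  rw [Complex.betaIntegral_eq_Gamma_mul_div _ _ (by simpa) (by simpa), add_comm (b : ℂ),
    mul_comm (Complex.Gamma b)] at key
  apply Complex.ofReal_injective
  rw [← intervalIntegral.integral_ofReal, Complex.ofReal_mul, Complex.ofReal_cpow hx.le,
    Complex.ofReal_div, Complex.ofReal_mul, ← Complex.Gamma_ofReal, ← Complex.Gamma_ofReal,
    ← Complex.Gamma_ofReal]
  push_cast
  rw [← key]
  refine intervalIntegral.integral_congr fun τ hτ => ?_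
  rw [uIcc_of_le hx.le] at hτ
  rw [Complex.ofReal_cpow hτ.1, Complex.ofReal_cpow (sub_nonneg.2 hτ.2)]
  push_cast
  ring

theorem integral_rlKernel_sub_mul_rlKernel {a b x : ℝ} (ha : 0 < a) (hb : 0 < b) (hx : 0 < x) :
    ∫ τ in (0:ℝ)..x, rlKernel a (x - τ) * rlKernel b τ = rlKernel (a + b) x := by
  have hΓ : Gamma a * Gamma b ≠ 0 := (mul_pos (Gamma_pos_of_pos ha) (Gamma_pos_of_pos hb)).ne'
  simp only [rlKernel, div_mul_div_comm, intervalIntegral.integral_div,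
    integral_sub_rpow_mul_rpow ha hb hx]
  field_simp

noncomputable def rlKernelExp (β μ t : ℝ) : ℝ := rlKernel β t * exp (-μ * t)

theorem rlKernelExp_one (μ t : ℝ) : rlKernelExp 1 μ t = exp (-μ * t) := by
  simp [rlKernelExp, rlKernel]

theorem intervalIntegrable_rlKernelExp {β : ℝ} (hβ : 0 < β) (μ a b : ℝ) :
    IntervalIntegrable (rlKernelExp β μ) volume a b := by
  have h : rlKernelExp β μ = fun t => t ^ (β - 1) * (exp (-μ * t) / Gamma β) := by
    ext t; simp only [rlKernelExp, rlKernel]; ring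
  rw [h]
  exact (intervalIntegral.intervalIntegrable_rpow' (by linarith)).mul_continuousOn
    (by fun_prop)

theorem integral_rlKernelExp_sub_mul_rlKernelExp {a b x : ℝ} (ha : 0 < a) (hb : 0 < b)
    (hx : 0 < x) (μ : ℝ) :
    ∫ τ in (0:ℝ)..x, rlKernelExp a μ (x - τ) * rlKernelExp b μ τ = rlKernelExp (a + b) μ x := by
  have h : ∀ τ, rlKernelExp a μ (x - τ) * rlKernelExp b μ τ
      = rlKernel a (x - τ) * rlKernel b τ * exp (-μ * x) := fun τ => by
    rw [rlKernelExp, rlKernelExp, show -μ * x = -μ * (x - τ) + -μ * τ by ring, exp_add]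
    ring
  simp_rw [h]
  rw [intervalIntegral.integral_mul_const, integral_rlKernel_sub_mul_rlKernel ha hb hx,
    rlKernelExp]

theorem stmt_14_general (α μ : ℝ) (hα : α ∈ Set.Ioo (0:ℝ) 1)
    (k l : ℝ → ℝ)
    (hk : ∀ t, k t = rlKernel (1 - α) t * Real.exp (-μ * t))
    (hl : ∀ t, l t = rlKernel α t * Real.exp (-μ * t)
        + μ * ∫ τ in (0:ℝ)..t, rlKernel α τ * Real.exp (-μ * τ)) :
    ∀ t : ℝ, 0 < t → (∫ τ in (0:ℝ)..t, k (t - τ) * l τ) = 1 := by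
  intro t ht
  set n := rlKernelExp α μ
  set m := rlKernelExp (1 - α) μ
  have hn : IntervalIntegrable n volume 0 t := intervalIntegrable_rlKernelExp hα.1 μ 0 t
  have hm : IntervalIntegrable m volume 0 t :=
    intervalIntegrable_rlKernelExp (sub_pos.2 hα.2) μ 0 t
  have hmn : ∀ x, 0 < x → ∫ τ in (0:ℝ)..x, m (x - τ) * n τ = exp (-μ * x) := fun x hx => by
    rw [integral_rlKernelExp_sub_mul_rlKernelExp (sub_pos.2 hα.2) hα.1 hx, sub_add_cancel,
      rlKernelExp_one]
  have hmn_int : IntervalIntegrable (fun τ => m (t - τ) * n τ) volume 0 t :=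
    intervalIntegral.intervalIntegrable_of_integral_ne_zero
      (by rw [hmn t ht]; exact (exp_pos _).ne')
  have hmN_int : IntervalIntegrable (fun τ => m (t - τ) * ∫ s in (0:ℝ)..τ, n s) volume 0 t := by
    refine IntervalIntegrable.mul_continuousOn ?_
      (intervalIntegral.continuousOn_primitive_interval' hn left_mem_uIcc)
    simpa using (hm.comp_sub_left t).symm
  calc ∫ τ in (0:ℝ)..t, k (t - τ) * l τ
      = ∫ τ in (0:ℝ)..t, m (t - τ) * n τ + μ * (m (t - τ) * ∫ s in (0:ℝ)..τ, n s) := by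
        congr 1 with τ
        rw [hk, hl]
        simp only [m, n, rlKernelExp]
        ring
    _ = exp (-μ * t) + μ * ∫ w in (0:ℝ)..t, ∫ s in (0:ℝ)..w, m (w - s) * n s := by
        rw [intervalIntegral.integral_add hmn_int (hmN_int.const_mul μ),
          intervalIntegral.integral_const_mul, hmn t ht,
          integral_sub_mul_primitive_eq_integral_conv ht.le hm hn]
    _ = exp (-μ * t) + μ * ∫ w in (0:ℝ)..t, exp (-μ * w) := by
        congr 2
        refine intervalIntegral.integral_congr_ae (.of_forall fun w hw => hmn w ?_)
        exact (uIoc_of_le ht.le ▸ hw).1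
    _ = 1 := by
        rw [mul_integral_exp_neg_mul]
        ring

theorem stmt_14 (α μ : ℝ) (hα : α ∈ Set.Ioo (0:ℝ) 1) (hμ : 0 ≤ μ)
    (k l : ℝ → ℝ)
    (hk : ∀ t, k t = rlKernel (1 - α) t * Real.exp (-μ * t))
    (hl : ∀ t, l t = rlKernel α t * Real.exp (-μ * t)
        + μ * ∫ τ in (0:ℝ)..t, rlKernel α τ * Real.exp (-μ * τ)) :
    ∀ t : ℝ, 0 < t → (∫ τ in (0:ℝ)..t, k (t - τ) * l τ) = 1 :=
  stmt_14_general α μ hα k l hk hl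
end
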